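/- Let p ∈ [1,∞). The ball measure of non-compactness of the identity embedding I : ℓ^p → ℓ^∞ equals exactly 2^{−1/p}: for every ρ > 2^{−1/p} the closed unit ball of ℓ^p can be covered by finitely many balls in ℓ^∞ of radius ρ, while for every ρ < 2^{−1/p}, every m ∈ ℕ and all y^1,…,y^m ∈ ℓ^∞ there exists x ∈ ℓ^p with ‖x‖_{ℓ^p} ≤ 1 such that ‖x − y^k‖_{ℓ^∞} ≥ ρ for all k = 1,…,m. -/

import Mathlib

open scoped ENNReal NNReal

/-- The `ℓ^p` (quasi)norm of a real sequence, `(∑_j |x_j|^p)^{1/p}`, valued in `ℝ≥0∞`. -/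
noncomputable def seqLpNorm (p : ℝ) (x : ℕ → ℝ) : ℝ≥0∞ :=
  (∑' j, (‖x j‖₊ : ℝ≥0∞) ^ p) ^ (1 / p)

/-- The `ℓ^∞` norm of a real sequence, `sup_j |x_j|`, valued in `ℝ≥0∞`. -/
noncomputable def seqSupNorm (x : ℕ → ℝ) : ℝ≥0∞ :=
  ⨆ j, (‖x j‖₊ : ℝ≥0∞)

/-!
If `seqLpNorm p x ≤ 1` then `|x i| ^ p + |x j| ^ p ≤ 1` for `i ≠ j`, so by the power mean
inequality any two coordinates of `x` differ by at most `2c`, where `c = 2^{-1/p}`; the midpoint of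
`inf x` and `sup x` is then a constant `s ∈ [-1, 1]` with `|x j - s| ≤ c` for all `j`. Finitely many
constants are `δ`-dense in `[-1, 1]`, which gives the covers for `ρ > c`. Conversely, by pigeonhole
any finitely many bounded centres `y k` have two coordinates `a ≠ b` at which they all agree up to
`ε`, and the unit vector `c (e_a - e_b)` is then at `ℓ^∞`-distance at least `c - ε / 2` from each
of them.
-/

open Set

theorem Real.add_le_two_mul_two_rpow_neg_of_rpow_add_rpow_le_one {p a b : ℝ} (hp : 1 ≤ p)
    (ha : 0 ≤ a) (hb : 0 ≤ b) (hab : a ^ p + b ^ p ≤ 1) :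
    a + b ≤ 2 * 2 ^ (-(1 / p)) := by
  have hp0 : 0 < p := zero_lt_one.trans_le hp
  have hpow : (a + b) ^ p ≤ 2 ^ (p - 1) := by
    lift a to ℝ≥0 using ha
    lift b to ℝ≥0 using hb
    have h := NNReal.rpow_add_le_mul_rpow_add_rpow a b hp
    have hab' : a ^ p + b ^ p ≤ 1 := by exact_mod_cast hab
    exact_mod_cast h.trans (mul_le_of_le_one_right (by positivity) hab')
  calc a + b = ((a + b) ^ p) ^ (1 / p) := by
        rw [← Real.rpow_mul (by positivity), mul_one_div_cancel hp0.ne', Real.rpow_one]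
    _ ≤ ((2 : ℝ) ^ (p - 1)) ^ (1 / p) := by gcongr
    _ = 2 * 2 ^ (-(1 / p)) := by
        have hexp : (p - 1) * (1 / p) = 1 + -(1 / p) := by field_simp; ring
        rw [← Real.rpow_mul zero_le_two, hexp, Real.rpow_add two_pos, Real.rpow_one]

theorem exists_mem_Icc_forall_abs_sub_le {ι : Type*} [Nonempty ι] {f : ι → ℝ} {B r : ℝ}
    (hB : ∀ i, |f i| ≤ B) (hr : ∀ i j, f i - f j ≤ 2 * r) :
    ∃ s ∈ Icc (-B) B, ∀ i, |f i - s| ≤ r := by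
  have hup : ∀ i, f i ≤ B := fun i => (abs_le.1 (hB i)).2
  have hlo : ∀ i, -B ≤ f i := fun i => (abs_le.1 (hB i)).1
  have hsup : ∀ i, f i ≤ ⨆ i, f i := le_ciSup ⟨B, forall_mem_range.2 hup⟩
  have hinf : ∀ i, ⨅ i, f i ≤ f i := ciInf_le ⟨-B, forall_mem_range.2 hlo⟩
  have hspread : ⨆ i, f i ≤ (⨅ i, f i) + 2 * r := ciSup_le fun i => by
    have : f i - 2 * r ≤ ⨅ j, f j := le_ciInf fun j => by linarith [hr i j]
    linarith
  have hsupB : ⨆ i, f i ≤ B := ciSup_le hup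
  have hinfB : -B ≤ ⨅ i, f i := le_ciInf hlo
  obtain ⟨i₀⟩ := ‹Nonempty ι›
  refine ⟨((⨆ i, f i) + ⨅ i, f i) / 2,
    ⟨by linarith [hsup i₀, hinf i₀], by linarith [hsup i₀, hinf i₀]⟩,
    fun i => abs_le.2 ⟨by linarith [hsup i, hinf i], by linarith [hsup i, hinf i]⟩⟩

theorem exists_fin_approx_of_isCompact {α : Type*} [PseudoMetricSpace α] {s : Set α}
    (hs : IsCompact s) {δ : ℝ} (hδ : 0 < δ) :
    ∃ (m : ℕ) (t : Fin m → α), ∀ u ∈ s, ∃ k, dist u (t k) < δ := by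
  obtain ⟨T, -, hT, hcover⟩ := finite_cover_balls_of_compact hs hδ
  have := hT.to_subtype
  obtain ⟨m, ⟨e⟩⟩ := Finite.exists_equiv_fin T
  refine ⟨m, fun k => e.symm k, fun u hu => ?_⟩
  obtain ⟨t, ht, hut⟩ := mem_iUnion₂.1 (hcover hu)
  exact ⟨e ⟨t, ht⟩, by simpa using hut⟩

theorem exists_ne_forall_abs_sub_lt {ι α : Type*} [Finite ι] [Infinite α] {y : ι → α → ℝ}
    {C : ι → ℝ} (hy : ∀ k j, |y k j| ≤ C k) {ε : ℝ} (hε : 0 < ε) :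
    ∃ a b, a ≠ b ∧ ∀ k, |y k a - y k b| < ε := by
  let cell : α → ∀ k, Icc ⌊-C k / ε⌋ ⌊C k / ε⌋ := fun j k =>
    ⟨⌊y k j / ε⌋, Int.floor_mono (by gcongr; exact (abs_le.1 (hy k j)).1),
      Int.floor_mono (by gcongr; exact (abs_le.1 (hy k j)).2)⟩
  obtain ⟨a, b, hab, hcell⟩ := Finite.exists_ne_map_eq_of_infinite cell
  refine ⟨a, b, hab, fun k => ?_⟩
  have h := Int.abs_sub_lt_one_of_floor_eq_floor (congrArg Subtype.val (congrFun hcell k))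
  rwa [← sub_div, abs_div, abs_of_pos hε, div_lt_one hε] at h

section SeqNorms

variable {p r : ℝ} {x : ℕ → ℝ}

theorem ofReal_le_seqSupNorm {r : ℝ} (j : ℕ) (h : r ≤ |x j|) :
    ENNReal.ofReal r ≤ seqSupNorm x := by
  refine (ENNReal.ofReal_le_ofReal h).trans ?_
  rw [← Real.enorm_eq_ofReal_abs, enorm_eq_nnnorm]
  exact le_iSup (fun j => (‖x j‖₊ : ℝ≥0∞)) j

theorem seqSupNorm_le_ofReal {r : ℝ} (h : ∀ j, |x j| ≤ r) : seqSupNorm x ≤ ENNReal.ofReal r :=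
  iSup_le fun j => by
    rw [← enorm_eq_nnnorm, Real.enorm_eq_ofReal_abs]
    exact ENNReal.ofReal_le_ofReal (h j)

theorem abs_le_toReal_seqSupNorm (hx : seqSupNorm x < ∞) (j : ℕ) :
    |x j| ≤ (seqSupNorm x).toReal :=
  (ENNReal.ofReal_le_iff_le_toReal hx.ne).1 (ofReal_le_seqSupNorm j le_rfl)

theorem seqSupNorm_const_lt_top (t : ℝ) : seqSupNorm (fun _ => t) < ∞ := by
  simp [seqSupNorm]

theorem seqLpNorm_le_one_iff (hp : 0 < p) :
    seqLpNorm p x ≤ 1 ↔ ∑' j, (‖x j‖₊ : ℝ≥0∞) ^ p ≤ 1 := by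
  rw [seqLpNorm, ← ENNReal.one_rpow (1 / p), ENNReal.rpow_le_rpow_iff (by positivity),
    ENNReal.one_rpow]

theorem abs_rpow_add_abs_rpow_le_one_of_seqLpNorm_le_one (hp : 0 < p) (hx : seqLpNorm p x ≤ 1)
    {i j : ℕ} (hij : i ≠ j) : |x i| ^ p + |x j| ^ p ≤ 1 := by
  have h := (ENNReal.sum_le_tsum {i, j}).trans ((seqLpNorm_le_one_iff hp).1 hx)
  simp only [Finset.sum_pair hij, ← enorm_eq_nnnorm, Real.enorm_eq_ofReal_abs,
    ENNReal.ofReal_rpow_of_nonneg (abs_nonneg _) hp.le] at h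
  rwa [← ENNReal.ofReal_add (by positivity) (by positivity), ENNReal.ofReal_le_one] at h

theorem abs_le_one_of_seqLpNorm_le_one (hp : 0 < p) (hx : seqLpNorm p x ≤ 1) (j : ℕ) :
    |x j| ≤ 1 := by
  by_contra! h
  have := abs_rpow_add_abs_rpow_le_one_of_seqLpNorm_le_one hp hx (Nat.succ_ne_self j).symm
  linarith [Real.one_lt_rpow h hp, Real.rpow_nonneg (abs_nonneg (x (j + 1))) p]

theorem seqLpNorm_single_sub_single (hp : 0 < p) {a b : ℕ} (hab : a ≠ b) (s : ℝ) :
    seqLpNorm p (Pi.single a s - Pi.single b s) = (2 * (‖s‖₊ : ℝ≥0∞) ^ p) ^ (1 / p) := by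
  rw [seqLpNorm, tsum_eq_sum (s := {a, b}), Finset.sum_pair hab]
  · simp [hab, hab.symm, two_mul]
  · intro j hj
    simp only [Finset.mem_insert, Finset.mem_singleton, not_or] at hj
    simp [hj.1, hj.2, hp]

theorem seqLpNorm_two_rpow_single_sub_single (hp : 0 < p) {a b : ℕ} (hab : a ≠ b) :
    seqLpNorm p (Pi.single a (2 ^ (-(1 / p))) - Pi.single b (2 ^ (-(1 / p)))) = 1 := by
  rw [seqLpNorm_single_sub_single hp hab, ← enorm_eq_nnnorm, Real.enorm_of_nonneg (by positivity),
    ENNReal.ofReal_rpow_of_nonneg (by positivity) hp.le, ← Real.rpow_mul zero_le_two, neg_mul,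
    one_div_mul_cancel hp.ne', Real.rpow_neg_one, ENNReal.ofReal_inv_of_pos two_pos,
    ENNReal.ofReal_ofNat, ENNReal.mul_inv_cancel two_ne_zero ENNReal.ofNat_ne_top, ENNReal.one_rpow]

theorem exists_mem_Icc_forall_abs_sub_le_of_seqLpNorm_le_one (hp : 1 ≤ p)
    (hx : seqLpNorm p x ≤ 1) : ∃ s ∈ Icc (-1 : ℝ) 1, ∀ j, |x j - s| ≤ 2 ^ (-(1 / p)) := by
  have hp0 : 0 < p := zero_lt_one.trans_le hp
  refine exists_mem_Icc_forall_abs_sub_le (abs_le_one_of_seqLpNorm_le_one hp0 hx) fun i j => ?_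
  rcases eq_or_ne i j with rfl | hij
  · rw [sub_self]
    positivity
  · calc x i - x j ≤ |x i| + |x j| := by linarith [le_abs_self (x i), neg_abs_le (x j)]
      _ ≤ 2 * 2 ^ (-(1 / p)) := Real.add_le_two_mul_two_rpow_neg_of_rpow_add_rpow_le_one hp
          (abs_nonneg _) (abs_nonneg _)
          (abs_rpow_add_abs_rpow_le_one_of_seqLpNorm_le_one hp0 hx hij)

theorem exists_fin_forall_abs_sub_le_of_seqLpNorm_le_one (hp : 1 ≤ p)
    (hr : 2 ^ (-(1 / p)) < r) :
    ∃ (m : ℕ) (y : Fin m → ℕ → ℝ), (∀ k, seqSupNorm (y k) < ∞) ∧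
      ∀ x : ℕ → ℝ, seqLpNorm p x ≤ 1 → ∃ k, ∀ j, |x j - y k j| ≤ r := by
  obtain ⟨m, t, ht⟩ :=
    exists_fin_approx_of_isCompact (isCompact_Icc (a := (-1 : ℝ)) (b := 1)) (sub_pos.2 hr)
  refine ⟨m, fun k _ => t k, fun k => seqSupNorm_const_lt_top _, fun x hx => ?_⟩
  obtain ⟨s, hs, hxs⟩ := exists_mem_Icc_forall_abs_sub_le_of_seqLpNorm_le_one hp hx
  obtain ⟨k, hk⟩ := ht s hs
  refine ⟨k, fun j => ?_⟩
  calc |x j - t k| ≤ |x j - s| + |s - t k| := abs_sub_le _ _ _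
    _ ≤ 2 ^ (-(1 / p)) + (r - 2 ^ (-(1 / p))) := add_le_add (hxs j) (Real.dist_eq s (t k) ▸ hk).le
    _ = r := add_sub_cancel _ _

theorem exists_seqLpNorm_le_one_forall_exists_le_abs_sub {ι : Type*} [Finite ι] (hp : 0 < p)
    (hr : r < 2 ^ (-(1 / p))) (y : ι → ℕ → ℝ) (hy : ∀ k, seqSupNorm (y k) < ∞) :
    ∃ x : ℕ → ℝ, seqLpNorm p x ≤ 1 ∧ ∀ k, ∃ j, r ≤ |x j - y k j| := by
  set c : ℝ := 2 ^ (-(1 / p))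
  obtain ⟨a, b, hab, hclose⟩ := exists_ne_forall_abs_sub_lt
    (fun k => abs_le_toReal_seqSupNorm (hy k)) (mul_pos two_pos (sub_pos.2 hr))
  have hx : seqLpNorm p (Pi.single a c - Pi.single b c) = 1 :=
    seqLpNorm_two_rpow_single_sub_single hp hab
  refine ⟨_, hx.le, fun k => ?_⟩
  have hfar : r ≤ |c - y k a| ∨ r ≤ |-c - y k b| := by
    by_contra! h
    have := hclose k
    simp only [abs_lt] at h this
    linarith
  rcases hfar with h | h
  · exact ⟨a, by simpa [hab] using h⟩
  · exact ⟨b, by simpa [hab.symm] using h⟩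

end SeqNorms

/-- For `p ∈ [1,∞)`, the ball measure of non-compactness of the identity
embedding `I : ℓ^p → ℓ^∞` equals `2^{−1/p}`: for every `ρ > 2^{−1/p}` the unit ball of
`ℓ^p` is covered by finitely many balls in `ℓ^∞` of radius `ρ`, while for every
`ρ < 2^{−1/p}` no finite family of balls in `ℓ^∞` of radius `ρ` covers it. -/
theorem lp_into_linfty_measure_of_noncompactness (p : ℝ) (hp : 1 ≤ p) :
    (∀ ρ : ℝ≥0∞, (2 : ℝ≥0∞) ^ (-(1 / p)) < ρ →
      ∃ (m : ℕ) (y : Fin m → ℕ → ℝ), (∀ k, seqSupNorm (y k) < ∞) ∧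
        ∀ x : ℕ → ℝ, seqLpNorm p x ≤ 1 →
          ∃ k, seqSupNorm (fun j => x j - y k j) ≤ ρ) ∧
    (∀ ρ : ℝ≥0∞, ρ < (2 : ℝ≥0∞) ^ (-(1 / p)) →
      ∀ (m : ℕ) (y : Fin m → ℕ → ℝ), (∀ k, seqSupNorm (y k) < ∞) →
        ∃ x : ℕ → ℝ, seqLpNorm p x ≤ 1 ∧
          ∀ k, ρ ≤ seqSupNorm (fun j => x j - y k j)) := by
  have hc : (2 : ℝ≥0∞) ^ (-(1 / p)) = ENNReal.ofReal (2 ^ (-(1 / p))) := by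
    rw [← ENNReal.ofReal_rpow_of_pos two_pos, ENNReal.ofReal_ofNat]
  rw [hc]
  refine ⟨fun ρ hρ => ?_, fun ρ hρ m y hy => ?_⟩
  · obtain ⟨r, -, hcr, hrρ⟩ := ENNReal.lt_iff_exists_real_btwn.1 hρ
    obtain ⟨m, y, hy, hcover⟩ := exists_fin_forall_abs_sub_le_of_seqLpNorm_le_one hp
      (ENNReal.ofReal_lt_ofReal_iff'.1 hcr).1
    refine ⟨m, y, hy, fun x hx => ?_⟩
    obtain ⟨k, hk⟩ := hcover x hx
    exact ⟨k, (seqSupNorm_le_ofReal hk).trans hrρ.le⟩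
  · have hρtop := ne_top_of_lt hρ
    obtain ⟨x, hx, hfar⟩ := exists_seqLpNorm_le_one_forall_exists_le_abs_sub
      (zero_lt_one.trans_le hp) ((ENNReal.lt_ofReal_iff_toReal_lt hρtop).1 hρ) y hy
    refine ⟨x, hx, fun k => ?_⟩
    obtain ⟨j, hj⟩ := hfar k
    rw [← ENNReal.ofReal_toReal hρtop]
    exact ofReal_le_seqSupNorm j hj
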